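/- arXiv:1807.05088 — 2 statements merged into one kernel-verified Lean document; each statement's English description precedes it below -/
import Mathlib

section
/- Let X be a real normed space, let 𝒰 ⊆ X be a nonempty compact set, and for each n ∈ ℕ let 𝒰_n be a nonempty closed subset of 𝒰 with the approximation property: for every u ∈ 𝒰 there exists a sequence (u_n) with u_n ∈ 𝒰_n and ‖u_n − u‖ → 0. Let J : 𝒰 → ℝ and J_n : 𝒰 → ℝ (n ∈ ℕ) be continuous functions such that for every sequence (v_n) in 𝒰 with v_n → v ∈ 𝒰 one has J_n(v_n) → J(v). Then: (a) for each n, J_n attains its minimum over 𝒰_n at some u_n* ∈ 𝒰_n; and (b) there exist a subsequence (u_{n_k}*) and u* ∈ 𝒰 such that ‖u_{n_k}* − u*‖ → 0 and J(u*) ≤ J(u) for all u ∈ 𝒰, i.e. u* minimizes J over 𝒰. -/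
/-!
Each `J_n` attains its minimum `u_n*` on the compact set `𝒰_n`, and by compactness of `𝒰` some
subsequence `u_{φ k}*` converges to a point `u* ∈ 𝒰`. For `u ∈ 𝒰` pick `u_n ∈ 𝒰_n` with `u_n → u`;
then `J_{φ k}(u_{φ k}*) ≤ J_{φ k}(u_{φ k})`, and consistency turns both sides into `J(u*) ≤ J(u)`
in the limit. Consistency is only assumed along full sequences, so along the subsequence it is
applied to the sequence that equals `u_{φ k}*` at `φ k` and `u*` elsewhere.
-/

open Filter Topology

def IsConsistentOn {X Y : Type*} [TopologicalSpace X] [TopologicalSpace Y]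
    (U : Set X) (Jn : ℕ → X → Y) (J : X → Y) : Prop :=
  ∀ (v : ℕ → X) (vl : X), (∀ n, v n ∈ U) → vl ∈ U →
    Tendsto v atTop (𝓝 vl) → Tendsto (fun n => Jn n (v n)) atTop (𝓝 (J vl))

theorem StrictMono.tendsto_extend_const {α : Type*} [TopologicalSpace α] {φ : ℕ → ℕ}
    (hφ : StrictMono φ) {g : ℕ → α} {l : α} (hg : Tendsto g atTop (𝓝 l)) :
    Tendsto (Function.extend φ g fun _ => l) atTop (𝓝 l) := by
  intro s hs
  obtain ⟨K, hK⟩ := eventually_atTop.mp (hg hs)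
  refine eventually_atTop.mpr ⟨φ K, fun n hn => ?_⟩
  by_cases hrange : ∃ k, φ k = n
  · obtain ⟨k, rfl⟩ := hrange
    rw [hφ.injective.extend_apply]
    exact hK k (hφ.le_iff_le.mp hn)
  · rw [Function.extend_apply' _ _ _ hrange]
    exact mem_of_mem_nhds hs

namespace IsConsistentOn

variable {X Y : Type*} [TopologicalSpace X] [TopologicalSpace Y]
  {U : Set X} {Jn : ℕ → X → Y} {J : X → Y}

theorem comp_strictMono (hcons : IsConsistentOn U Jn J) {φ : ℕ → ℕ} (hφ : StrictMono φ)
    {w : ℕ → X} {l : X} (hw : ∀ k, w k ∈ U) (hl : l ∈ U) (hwl : Tendsto w atTop (𝓝 l)) :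
    Tendsto (fun k => Jn (φ k) (w k)) atTop (𝓝 (J l)) := by
  set v := Function.extend φ w fun _ => l
  have hvU : ∀ n, v n ∈ U := fun n => by
    by_cases hrange : ∃ k, φ k = n
    · obtain ⟨k, rfl⟩ := hrange
      simpa only [v, hφ.injective.extend_apply] using hw k
    · simpa only [v, Function.extend_apply' _ _ _ hrange] using hl
  have hv := (hcons v l hvU hl (hφ.tendsto_extend_const hwl)).comp hφ.tendsto_atTop
  simpa only [Function.comp_def, v, hφ.injective.extend_apply] using hv

theorem le_of_isMinOn [Preorder Y] [OrderClosedTopology Y] (hcons : IsConsistentOn U Jn J)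
    {Un : ℕ → Set X} (hUn_sub : ∀ n, Un n ⊆ U) {ustar : ℕ → X}
    (hustar : ∀ n, ustar n ∈ Un n) (hmin : ∀ n, IsMinOn (Jn n) (Un n) (ustar n)) {φ : ℕ → ℕ} (hφ : StrictMono φ) {ul : X}
    (hul : ul ∈ U) (hconv : Tendsto (ustar ∘ φ) atTop (𝓝 ul)) {u : X} (hu : u ∈ U)
    {useq : ℕ → X} (huseq : ∀ n, useq n ∈ Un n) (hlim : Tendsto useq atTop (𝓝 u)) :
    J ul ≤ J u := by
  have hlim_min := hcons.comp_strictMono hφ (fun k => hUn_sub _ (hustar _)) hul hconv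
  have hlim_seq := hcons.comp_strictMono hφ (fun k => hUn_sub _ (huseq (φ k))) hu
    (hlim.comp hφ.tendsto_atTop)
  exact le_of_tendsto_of_tendsto hlim_min hlim_seq
    (Eventually.of_forall fun k => isMinOn_iff.mp (hmin (φ k)) _ (huseq (φ k)))

end IsConsistentOn

theorem approx_minimizers_subsequence_converge_general
    {X : Type*} [NormedAddCommGroup X] [NormedSpace ℝ X]
    (U : Set X) (hUcpt : IsCompact U)
    (Un : ℕ → Set X) (hUn_ne : ∀ n, (Un n).Nonempty) (hUn_cl : ∀ n, IsClosed (Un n))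
    (hUn_sub : ∀ n, Un n ⊆ U)
    (happrox : ∀ u ∈ U, ∃ useq : ℕ → X, (∀ n, useq n ∈ Un n) ∧
      Tendsto (fun n => ‖useq n - u‖) atTop (nhds 0))
    (J : X → ℝ) (Jn : ℕ → X → ℝ)
    (hJncont : ∀ n, ContinuousOn (Jn n) U)
    (hcons : ∀ (v : ℕ → X) (vl : X), (∀ n, v n ∈ U) → vl ∈ U →
      Tendsto v atTop (nhds vl) → Tendsto (fun n => Jn n (v n)) atTop (nhds (J vl))) :
    (∀ n, ∃ u ∈ Un n, ∀ v ∈ Un n, Jn n u ≤ Jn n v) ∧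
    ∃ ustar : ℕ → X,
      (∀ n, ustar n ∈ Un n ∧ ∀ v ∈ Un n, Jn n (ustar n) ≤ Jn n v) ∧
      ∃ φ : ℕ → ℕ, StrictMono φ ∧ ∃ ul ∈ U,
        Tendsto (fun k => ‖ustar (φ k) - ul‖) atTop (nhds 0) ∧
        ∀ u ∈ U, J ul ≤ J u := by
  have hexists_min : ∀ n, ∃ u ∈ Un n, IsMinOn (Jn n) (Un n) u := fun n =>
    (hUcpt.of_isClosed_subset (hUn_cl n) (hUn_sub n)).exists_isMinOn (hUn_ne n)
      ((hJncont n).mono (hUn_sub n))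
  choose ustar hustar hmin using hexists_min
  obtain ⟨ul, hul, φ, hφ, hconv⟩ := hUcpt.isSeqCompact fun n => hUn_sub n (hustar n)
  refine ⟨fun n => ⟨ustar n, hustar n, isMinOn_iff.mp (hmin n)⟩, ustar,
    fun n => ⟨hustar n, isMinOn_iff.mp (hmin n)⟩, φ, hφ, ul, hul,
    tendsto_iff_norm_sub_tendsto_zero.mp hconv, fun u hu => ?_⟩
  obtain ⟨useq, huseq, hlim⟩ := happrox u hu
  exact IsConsistentOn.le_of_isMinOn hcons hUn_sub hustar hmin hφ hul hconv hu huseq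
    (tendsto_iff_norm_sub_tendsto_zero.mpr hlim)

/-- Existence of minimizers of the approximating problems over the sets `Un n`, and
subsequential convergence of these minimizers to a minimizer of `J` over the compact set `U`. -/
theorem approx_minimizers_subsequence_converge
    {X : Type*} [NormedAddCommGroup X] [NormedSpace ℝ X]
    (U : Set X) (hUcpt : IsCompact U) (hUne : U.Nonempty)
    (Un : ℕ → Set X) (hUn_ne : ∀ n, (Un n).Nonempty) (hUn_cl : ∀ n, IsClosed (Un n))
    (hUn_sub : ∀ n, Un n ⊆ U)
    (happrox : ∀ u ∈ U, ∃ useq : ℕ → X, (∀ n, useq n ∈ Un n) ∧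
      Tendsto (fun n => ‖useq n - u‖) atTop (nhds 0))
    (J : X → ℝ) (Jn : ℕ → X → ℝ)
    (hJcont : ContinuousOn J U) (hJncont : ∀ n, ContinuousOn (Jn n) U)
    (hcons : ∀ (v : ℕ → X) (vl : X), (∀ n, v n ∈ U) → vl ∈ U →
      Tendsto v atTop (nhds vl) → Tendsto (fun n => Jn n (v n)) atTop (nhds (J vl))) :
    (∀ n, ∃ u ∈ Un n, ∀ v ∈ Un n, Jn n u ≤ Jn n v) ∧
    ∃ ustar : ℕ → X,
      (∀ n, ustar n ∈ Un n ∧ ∀ v ∈ Un n, Jn n (ustar n) ≤ Jn n v) ∧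
      ∃ φ : ℕ → ℕ, StrictMono φ ∧ ∃ ul ∈ U,
        Tendsto (fun k => ‖ustar (φ k) - ul‖) atTop (nhds 0) ∧
        ∀ u ∈ U, J ul ≤ J u :=
  approx_minimizers_subsequence_converge_general U hUcpt Un hUn_ne hUn_cl hUn_sub happrox J Jn
    hJncont hcons
end

section
/- Let H be a real Hilbert space, let U ⊆ H be a nonempty closed convex set, and for each n ∈ ℕ let U_n ⊆ U be a nonempty closed convex set contained in a finite-dimensional subspace of H, with the approximation property: for every u ∈ U there exists a sequence (u_n) with u_n ∈ U_n and ‖u_n − u‖ → 0. Let G_n : U → [0, ∞) and G : U → [0, ∞), and define J_n(u) := G_n(u) + ‖u‖² and J(u) := G(u) + ‖u‖². Assume: (i) each J_n is continuous and strictly convex on U and J is strictly convex on U; (ii) whenever (v_n) ⊆ U with ‖v_n − v‖ → 0 for some v ∈ U, one has J_n(v_n) → J(v); (iii) whenever (v_n) ⊆ U converges weakly to some v ∈ U, one has G_n(v_n) → G(v). Then: (a) for each n, J_n attains its minimum over U_n at a unique point u_n*; (b) J attains its minimum over U at a unique point u*; and (c) the entire sequence (u_n*) converges strongly to u*, i.e.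 ‖u_n* − u*‖ → 0. -/
/-!
Each `Jn n` is continuous on the closed set `Un n`, which lies in a finite-dimensional subspace,
and its sublevel sets are bounded because `Jn n ≥ ‖·‖ ^ 2`; so it has a minimizer, unique by
strict convexity. The minimizers `u n` are bounded, since `Jn n (u n) ≤ Jn n (s n) → J w` for an
approximating sequence `s n → w`. Along any subsequence a further subsequence converges weakly to
some `v`, which lies in `U` because closed convex sets are weakly closed. Then `Gn n (u n) → G v`,
while `‖u n‖ ^ 2 ≤ Jn n (s n) - Gn n (u n) → J v - G v = ‖v‖ ^ 2` for `s n → v`; weak convergence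
together with `limsup ‖u n‖ ≤ ‖v‖` is strong convergence. Consistency then gives `J v ≤ J w` for
every `w ∈ U`, so `v` is the unique minimizer of `J`, and the whole sequence converges to it.
-/

open Filter Topology Set

theorem StrictMono.exists_leftInverse_tendsto_atTop {φ : ℕ → ℕ} (hφ : StrictMono φ) :
    ∃ g : ℕ → ℕ, Function.LeftInverse g φ ∧ Tendsto g atTop atTop := by
  classical
  refine ⟨fun n => Nat.findGreatest (fun k => φ k ≤ n) n, fun k => ?_, ?_⟩
  · rw [Nat.findGreatest_eq_iff]
    exact ⟨hφ.le_apply, fun _ => le_rfl, fun n hn _ => not_le.2 (hφ hn)⟩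
  · refine tendsto_atTop_atTop.2 fun k => ⟨φ k, fun n hn => ?_⟩
    exact Nat.le_findGreatest (hφ.le_apply.trans hn) hn

theorem StrictConvexOn.existsUnique_isMinOn {E : Type*} [AddCommGroup E] [Module ℝ E]
    {s : Set E} {f : E → ℝ} (hf : StrictConvexOn ℝ s f) (h : ∃ a ∈ s, IsMinOn f s a) :
    ∃! a, a ∈ s ∧ IsMinOn f s a := by
  obtain ⟨a, ha, hmin⟩ := h
  exact ⟨a, ⟨ha, hmin⟩, fun b hb => hf.eq_of_isMinOn hb.2 hmin hb.1 ha⟩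

theorem IsClosed.exists_isMinOn_of_subset_finiteDimensional {E : Type*} [NormedAddCommGroup E]
    [NormedSpace ℝ E] {A : Set E} (hA : IsClosed A) {S : Submodule ℝ E} [FiniteDimensional ℝ S]
    (hAS : A ⊆ S) {f : E → ℝ} (hf : ContinuousOn f A) {x₀ : E} (hx₀ : x₀ ∈ A)
    (hbdd : Bornology.IsBounded {x ∈ A | f x ≤ f x₀}) : ∃ a ∈ A, IsMinOn f A a := by
  set K := {x ∈ A | f x ≤ f x₀}
  have hK : IsCompact K := by
    obtain ⟨R, hR⟩ := hbdd.subset_closedBall 0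
    refine ((isCompact_closedBall (0 : S) R).image continuous_subtype_val).of_isClosed_subset
      (hf.preimage_isClosed_of_isClosed hA isClosed_Iic) fun x hx => ?_
    exact ⟨⟨x, hAS hx.1⟩, by simpa using hR hx, rfl⟩
  obtain ⟨a, haK, ha⟩ := hK.exists_isMinOn ⟨x₀, hx₀, le_rfl⟩ (hf.mono fun _ hx => hx.1)
  refine ⟨a, haK.1, fun x hx => ?_⟩
  by_cases hxK : f x ≤ f x₀
  · exact ha ⟨hx, hxK⟩
  · exact haK.2.trans (not_le.1 hxK).le

section Normed

variable {E : Type*} [NormedAddCommGroup E]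

def Approximates (Un : ℕ → Set E) (U : Set E) : Prop :=
  ∀ u ∈ U, ∃ s : ℕ → E, (∀ n, s n ∈ Un n) ∧ Tendsto (fun n => ‖s n - u‖) atTop (𝓝 0)

def ConsistentOn (U : Set E) (Fn : ℕ → E → ℝ) (F : E → ℝ) : Prop :=
  ∀ (v : ℕ → E) (vl : E), (∀ n, v n ∈ U) → vl ∈ U →
    Tendsto (fun n => ‖v n - vl‖) atTop (𝓝 0) → Tendsto (fun n => Fn n (v n)) atTop (𝓝 (F vl))

theorem Approximates.comp_strictMono {Un : ℕ → Set E} {U : Set E} (h : Approximates Un U)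
    {μ : ℕ → ℕ} (hμ : StrictMono μ) : Approximates (fun k => Un (μ k)) U := fun u hu => by
  obtain ⟨s, hs, hsu⟩ := h u hu
  exact ⟨fun k => s (μ k), fun k => hs (μ k), hsu.comp hμ.tendsto_atTop⟩

-- A sequence along `μ` is padded to a full sequence by `y ∘ g`, with `g` a left inverse of `μ`.
theorem ConsistentOn.comp_strictMono {U : Set E} {Fn : ℕ → E → ℝ} {F : E → ℝ}
    (h : ConsistentOn U Fn F) {μ : ℕ → ℕ} (hμ : StrictMono μ) :
    ConsistentOn U (fun k => Fn (μ k)) F := by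
  intro y vl hy hvl hyv
  obtain ⟨g, hgμ, hg⟩ := hμ.exists_leftInverse_tendsto_atTop
  have := (h (y ∘ g) vl (fun n => hy (g n)) hvl (hyv.comp hg)).comp hμ.tendsto_atTop
  simpa [Function.comp_def, hgμ _] using this

theorem exists_forall_norm_le_of_isMinOn {U : Set E} {Un : ℕ → Set E} (hUn_sub : ∀ n, Un n ⊆ U)
    (happrox : Approximates Un U) {Gn : ℕ → E → ℝ} {J : E → ℝ} {Jn : ℕ → E → ℝ}
    (hGn_nonneg : ∀ n, ∀ x ∈ U, 0 ≤ Gn n x) (hJn_def : ∀ n x, Jn n x = Gn n x + ‖x‖ ^ 2)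
    (hcons : ConsistentOn U Jn J) {u : ℕ → E}
    (hu : ∀ n, u n ∈ Un n ∧ IsMinOn (Jn n) (Un n) (u n)) : ∃ M, ∀ n, ‖u n‖ ≤ M := by
  have hu₀ : u 0 ∈ U := hUn_sub 0 (hu 0).1
  obtain ⟨s, hs, hsu⟩ := happrox (u 0) hu₀
  obtain ⟨B, hB⟩ := (hcons s (u 0) (fun n => hUn_sub n (hs n)) hu₀ hsu).bddAbove_range
  refine ⟨√B, fun n => Real.le_sqrt_of_sq_le ?_⟩
  calc ‖u n‖ ^ 2 ≤ Jn n (u n) := by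
        rw [hJn_def]; linarith [hGn_nonneg n (u n) (hUn_sub n (hu n).1)]
    _ ≤ Jn n (s n) := (hu n).2 (hs n)
    _ ≤ B := hB (mem_range_self n)

end Normed

section InnerProductSpace

variable {E : Type*} [NormedAddCommGroup E] [InnerProductSpace ℝ E]

def WeakTendsto (x : ℕ → E) (v : E) : Prop :=
  ∀ w : E, Tendsto (fun n => (inner ℝ (x n) w : ℝ)) atTop (𝓝 (inner ℝ v w))

theorem WeakTendsto.comp {x : ℕ → E} {v : E} (hx : WeakTendsto x v) {g : ℕ → ℕ}
    (hg : Tendsto g atTop atTop) : WeakTendsto (x ∘ g) v :=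
  fun w => (hx w).comp hg

theorem exists_subseq_weakTendsto [CompleteSpace E] {x : ℕ → E} {M : ℝ} (hx : ∀ n, ‖x n‖ ≤ M) :
    ∃ v φ, StrictMono φ ∧ WeakTendsto (x ∘ φ) v := by
  set K := (Submodule.span ℝ (range x)).topologicalClosure
  have hxK : ∀ n, x n ∈ K :=
    fun n => Submodule.le_topologicalClosure _ (Submodule.subset_span (mem_range_self n))
  have : CompleteSpace K := (Submodule.isClosed_topologicalClosure _).completeSpace_coe
  have : TopologicalSpace.SeparableSpace K := by
    refine TopologicalSpace.IsSeparable.separableSpace ?_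
    rw [Submodule.topologicalClosure_coe]
    exact (countable_range x).isSeparable.span.closure
  -- Sequential Banach–Alaoglu in the separable space `K`, through the Riesz isomorphism.
  let f : ℕ → WeakDual ℝ K :=
    fun n => StrongDual.toWeakDual (InnerProductSpace.toDual ℝ K ⟨x n, hxK n⟩)
  have hf : ∀ n, f n ∈ WeakDual.toStrongDual ⁻¹' Metric.closedBall 0 M := fun n => by
    simp only [f, mem_preimage, StrongDual.toStrongDual_toWeakDual, Metric.mem_closedBall]
    exact ((dist_zero_right _).trans ((InnerProductSpace.toDual ℝ K).norm_map _)).trans_le (hx n)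
  obtain ⟨g, -, φ, hφ, hlim⟩ := WeakDual.isSeqCompact_closedBall ℝ K 0 M hf
  refine ⟨(InnerProductSpace.toDual ℝ K).symm (WeakDual.toStrongDual g), φ, hφ, fun w => ?_⟩
  -- Testing against `w` is testing against its projection onto `K`.
  have := ((WeakDual.eval_continuous (K.orthogonalProjectionOnto w)).tendsto g).comp hlim
  convert this using 2 with n
  · simp [f]
  · rw [← Submodule.inner_orthogonalProjectionOnto_eq_of_mem_left,
      InnerProductSpace.toDual_symm_apply]
    rfl

theorem Convex.mem_of_weakTendsto [CompleteSpace E] {U : Set E} (hU : Convex ℝ U)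
    (hU' : IsClosed U) {x : ℕ → E} {v : E} (hxU : ∀ n, x n ∈ U) (hxv : WeakTendsto x v) :
    v ∈ U := by
  by_contra hv
  obtain ⟨f, c, hfU, hfv⟩ := geometric_hahn_banach_closed_point hU hU' hv
  have hf : ∀ y, f y = inner ℝ y ((InnerProductSpace.toDual ℝ E).symm f) := fun y => by
    rw [real_inner_comm, InnerProductSpace.toDual_symm_apply]
  have hlim : Tendsto (fun n => f (x n)) atTop (𝓝 (f v)) := by
    simpa only [hf] using hxv _
  exact (le_of_tendsto hlim (Eventually.of_forall fun n => (hfU _ (hxU n)).le)).not_gt hfv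

theorem WeakTendsto.tendsto_norm_sub_of_norm_sq_le {x : ℕ → E} {v : E} (hxv : WeakTendsto x v)
    {a : ℕ → ℝ} (ha : Tendsto a atTop (𝓝 (‖v‖ ^ 2))) (hxa : ∀ n, ‖x n‖ ^ 2 ≤ a n) :
    Tendsto (fun n => ‖x n - v‖) atTop (𝓝 0) := by
  have hbound : Tendsto (fun n => a n - 2 * inner ℝ (x n) v + ‖v‖ ^ 2) atTop (𝓝 0) := by
    have := (ha.sub ((hxv v).const_mul 2)).add_const (‖v‖ ^ 2)
    rwa [real_inner_self_eq_norm_sq, show ‖v‖ ^ 2 - 2 * ‖v‖ ^ 2 + ‖v‖ ^ 2 = 0 by ring] at this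
  have hsq : Tendsto (fun n => ‖x n - v‖ ^ 2) atTop (𝓝 0) :=
    squeeze_zero (fun n => sq_nonneg _)
      (fun n => by rw [norm_sub_sq_real]; linarith [hxa n]) hbound
  simpa using hsq.sqrt

def WeaklyConsistentOn (U : Set E) (Fn : ℕ → E → ℝ) (F : E → ℝ) : Prop :=
  ∀ (v : ℕ → E) (vl : E), (∀ n, v n ∈ U) → vl ∈ U →
    WeakTendsto v vl → Tendsto (fun n => Fn n (v n)) atTop (𝓝 (F vl))

theorem WeaklyConsistentOn.comp_strictMono {U : Set E} {Fn : ℕ → E → ℝ} {F : E → ℝ}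
    (h : WeaklyConsistentOn U Fn F) {μ : ℕ → ℕ} (hμ : StrictMono μ) :
    WeaklyConsistentOn U (fun k => Fn (μ k)) F := by
  intro y vl hy hvl hyv
  obtain ⟨g, hgμ, hg⟩ := hμ.exists_leftInverse_tendsto_atTop
  have := (h (y ∘ g) vl (fun n => hy (g n)) hvl (hyv.comp hg)).comp hμ.tendsto_atTop
  simpa [Function.comp_def, hgμ _] using this

variable {U : Set E} {Un : ℕ → Set E} {G : E → ℝ} {Gn : ℕ → E → ℝ} {J : E → ℝ}
  {Jn : ℕ → E → ℝ} {u : ℕ → E}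

theorem tendsto_norm_sub_and_isMinOn_of_weakTendsto (hUn_sub : ∀ n, Un n ⊆ U)
    (happrox : Approximates Un U) (hJ_def : ∀ x, J x = G x + ‖x‖ ^ 2)
    (hJn_def : ∀ n x, Jn n x = Gn n x + ‖x‖ ^ 2) (hcons : ConsistentOn U Jn J)
    (hweak : WeaklyConsistentOn U Gn G) (hu : ∀ n, u n ∈ Un n ∧ IsMinOn (Jn n) (Un n) (u n))
    {v : E} (hv : v ∈ U) (huv : WeakTendsto u v) :
    Tendsto (fun n => ‖u n - v‖) atTop (𝓝 0) ∧ IsMinOn J U v := by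
  have huU : ∀ n, u n ∈ U := fun n => hUn_sub n (hu n).1
  have hupper : ∀ w ∈ U, ∃ b : ℕ → ℝ, (∀ n, Jn n (u n) ≤ b n) ∧ Tendsto b atTop (𝓝 (J w)) := by
    intro w hw
    obtain ⟨s, hs, hsw⟩ := happrox w hw
    exact ⟨fun n => Jn n (s n), fun n => (hu n).2 (hs n),
      hcons s w (fun n => hUn_sub n (hs n)) hw hsw⟩
  obtain ⟨b, hub, hb⟩ := hupper v hv
  have hstrong : Tendsto (fun n => ‖u n - v‖) atTop (𝓝 0) := by
    refine huv.tendsto_norm_sub_of_norm_sq_le (a := fun n => b n - Gn n (u n)) ?_ fun n => ?_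
    · simpa [hJ_def] using hb.sub (hweak u v huU hv huv)
    · linarith [hub n, hJn_def n (u n)]
  refine ⟨hstrong, isMinOn_iff.2 fun w hw => ?_⟩
  obtain ⟨b', hub', hb'⟩ := hupper w hw
  exact le_of_tendsto_of_tendsto' (hcons u v huU hv hstrong) hb' hub'

theorem exists_isMinOn_subseq_tendsto [CompleteSpace E] (hU_cl : IsClosed U)
    (hU_cv : Convex ℝ U) (hUn_sub : ∀ n, Un n ⊆ U) (happrox : Approximates Un U)
    (hGn_nonneg : ∀ n, ∀ x ∈ U, 0 ≤ Gn n x) (hJ_def : ∀ x, J x = G x + ‖x‖ ^ 2)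
    (hJn_def : ∀ n x, Jn n x = Gn n x + ‖x‖ ^ 2) (hcons : ConsistentOn U Jn J)
    (hweak : WeaklyConsistentOn U Gn G) (hu : ∀ n, u n ∈ Un n ∧ IsMinOn (Jn n) (Un n) (u n))
    {m : ℕ → ℕ} (hm : StrictMono m) :
    ∃ v ∈ U, IsMinOn J U v ∧ ∃ ψ : ℕ → ℕ, Tendsto (fun k => ‖u (m (ψ k)) - v‖) atTop (𝓝 0) := by
  obtain ⟨M, hM⟩ := exists_forall_norm_le_of_isMinOn hUn_sub happrox hGn_nonneg hJn_def hcons hu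
  obtain ⟨v, φ, hφ, hv⟩ := exists_subseq_weakTendsto fun k => hM (m k)
  have hμ : StrictMono (m ∘ φ) := hm.comp hφ
  have hvU : v ∈ U := hU_cv.mem_of_weakTendsto hU_cl (fun k => hUn_sub _ (hu _).1) hv
  obtain ⟨hlim, hmin⟩ := tendsto_norm_sub_and_isMinOn_of_weakTendsto (fun k => hUn_sub _)
    (happrox.comp_strictMono hμ) hJ_def (fun k => hJn_def _) (hcons.comp_strictMono hμ)
    (hweak.comp_strictMono hμ) (fun k => hu _) hvU hv
  exact ⟨v, hvU, hmin, φ, hlim⟩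

end InnerProductSpace

theorem strictly_convex_approx_minimizers_strong_convergence_general
    {H : Type*} [NormedAddCommGroup H] [InnerProductSpace ℝ H] [CompleteSpace H]
    (U : Set H) (hU_cl : IsClosed U) (hU_cv : Convex ℝ U)
    (Un : ℕ → Set H) (hUn_ne : ∀ n, (Un n).Nonempty) (hUn_cl : ∀ n, IsClosed (Un n))
    (hUn_cv : ∀ n, Convex ℝ (Un n)) (hUn_sub : ∀ n, Un n ⊆ U)
    (hUn_fd : ∀ n, ∃ S : Submodule ℝ H, FiniteDimensional ℝ S ∧ Un n ⊆ (S : Set H))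
    (happrox : ∀ u ∈ U, ∃ useq : ℕ → H, (∀ n, useq n ∈ Un n) ∧
      Tendsto (fun n => ‖useq n - u‖) atTop (nhds 0))
    (G : H → ℝ) (Gn : ℕ → H → ℝ)
    (hGn_nonneg : ∀ n, ∀ u ∈ U, 0 ≤ Gn n u)
    (J : H → ℝ) (Jn : ℕ → H → ℝ)
    (hJ_def : ∀ u, J u = G u + ‖u‖ ^ 2) (hJn_def : ∀ n u, Jn n u = Gn n u + ‖u‖ ^ 2)
    (hJn_cont : ∀ n, ContinuousOn (Jn n) U)
    (hJn_sc : ∀ n, StrictConvexOn ℝ U (Jn n)) (hJ_sc : StrictConvexOn ℝ U J)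
    (hcons : ∀ (v : ℕ → H) (vl : H), (∀ n, v n ∈ U) → vl ∈ U →
      Tendsto (fun n => ‖v n - vl‖) atTop (nhds 0) →
      Tendsto (fun n => Jn n (v n)) atTop (nhds (J vl)))
    (hweak : ∀ (v : ℕ → H) (vl : H), (∀ n, v n ∈ U) → vl ∈ U →
      (∀ w : H, Tendsto (fun n => (inner ℝ (v n) w : ℝ)) atTop (nhds (inner ℝ vl w))) →
      Tendsto (fun n => Gn n (v n)) atTop (nhds (G vl))) :
    (∀ n, ∃! u, u ∈ Un n ∧ ∀ v ∈ Un n, Jn n u ≤ Jn n v) ∧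
    (∃! u, u ∈ U ∧ ∀ v ∈ U, J u ≤ J v) ∧
    ∀ (ustar : ℕ → H) (ul : H),
      (∀ n, ustar n ∈ Un n ∧ ∀ v ∈ Un n, Jn n (ustar n) ≤ Jn n v) →
      (ul ∈ U ∧ ∀ v ∈ U, J ul ≤ J v) →
      Tendsto (fun n => ‖ustar n - ul‖) atTop (nhds 0) := by
  have parta : ∀ n, ∃! u, u ∈ Un n ∧ IsMinOn (Jn n) (Un n) u := fun n => by
    obtain ⟨S, _, hUnS⟩ := hUn_fd n
    obtain ⟨x₀, hx₀⟩ := hUn_ne n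
    refine ((hJn_sc n).subset (hUn_sub n) (hUn_cv n)).existsUnique_isMinOn
      ((hUn_cl n).exists_isMinOn_of_subset_finiteDimensional hUnS
        ((hJn_cont n).mono (hUn_sub n)) hx₀ ?_)
    refine (Metric.isBounded_closedBall (x := 0) (r := √(Jn n x₀))).subset fun x hx => ?_
    rw [mem_closedBall_zero_iff]
    refine Real.le_sqrt_of_sq_le (le_trans ?_ hx.2)
    rw [hJn_def]
    linarith [hGn_nonneg n x (hUn_sub n hx.1)]
  choose u hu using fun n => (parta n).exists
  obtain ⟨v, hvU, hv, -⟩ := exists_isMinOn_subseq_tendsto (u := u) hU_cl hU_cv hUn_sub happrox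
    hGn_nonneg hJ_def hJn_def hcons hweak hu strictMono_id
  have partb := hJ_sc.existsUnique_isMinOn ⟨v, hvU, hv⟩
  refine ⟨parta, partb, fun ustar ul hustar hul => ?_⟩
  refine tendsto_of_subseq_tendsto fun ns hns => ?_
  obtain ⟨m, -, hm⟩ := strictMono_subseq_of_tendsto_atTop hns
  obtain ⟨w, hwU, hw, ψ, hψ⟩ := exists_isMinOn_subseq_tendsto hU_cl hU_cv hUn_sub happrox
    hGn_nonneg hJ_def hJn_def hcons hweak hustar hm
  rw [partb.unique ⟨hwU, hw⟩ hul] at hψ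
  exact ⟨m ∘ ψ, hψ⟩

/-- Strong convergence of the unique minimizers of the strictly convex regularized
approximating problems to the unique minimizer of the limit problem. -/
theorem strictly_convex_approx_minimizers_strong_convergence
    {H : Type*} [NormedAddCommGroup H] [InnerProductSpace ℝ H] [CompleteSpace H]
    (U : Set H) (hU_ne : U.Nonempty) (hU_cl : IsClosed U) (hU_cv : Convex ℝ U)
    (Un : ℕ → Set H) (hUn_ne : ∀ n, (Un n).Nonempty) (hUn_cl : ∀ n, IsClosed (Un n))
    (hUn_cv : ∀ n, Convex ℝ (Un n)) (hUn_sub : ∀ n, Un n ⊆ U)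
    (hUn_fd : ∀ n, ∃ S : Submodule ℝ H, FiniteDimensional ℝ S ∧ Un n ⊆ (S : Set H))
    (happrox : ∀ u ∈ U, ∃ useq : ℕ → H, (∀ n, useq n ∈ Un n) ∧
      Tendsto (fun n => ‖useq n - u‖) atTop (nhds 0))
    (G : H → ℝ) (Gn : ℕ → H → ℝ)
    (hG_nonneg : ∀ u ∈ U, 0 ≤ G u) (hGn_nonneg : ∀ n, ∀ u ∈ U, 0 ≤ Gn n u)
    (J : H → ℝ) (Jn : ℕ → H → ℝ)
    (hJ_def : ∀ u, J u = G u + ‖u‖ ^ 2) (hJn_def : ∀ n u, Jn n u = Gn n u + ‖u‖ ^ 2)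
    (hJn_cont : ∀ n, ContinuousOn (Jn n) U)
    (hJn_sc : ∀ n, StrictConvexOn ℝ U (Jn n)) (hJ_sc : StrictConvexOn ℝ U J)
    (hcons : ∀ (v : ℕ → H) (vl : H), (∀ n, v n ∈ U) → vl ∈ U →
      Tendsto (fun n => ‖v n - vl‖) atTop (nhds 0) →
      Tendsto (fun n => Jn n (v n)) atTop (nhds (J vl)))
    (hweak : ∀ (v : ℕ → H) (vl : H), (∀ n, v n ∈ U) → vl ∈ U →
      (∀ w : H, Tendsto (fun n => (inner ℝ (v n) w : ℝ)) atTop (nhds (inner ℝ vl w))) →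
      Tendsto (fun n => Gn n (v n)) atTop (nhds (G vl))) :
    (∀ n, ∃! u, u ∈ Un n ∧ ∀ v ∈ Un n, Jn n u ≤ Jn n v) ∧
    (∃! u, u ∈ U ∧ ∀ v ∈ U, J u ≤ J v) ∧
    ∀ (ustar : ℕ → H) (ul : H),
      (∀ n, ustar n ∈ Un n ∧ ∀ v ∈ Un n, Jn n (ustar n) ≤ Jn n v) →
      (ul ∈ U ∧ ∀ v ∈ U, J ul ≤ J v) →
      Tendsto (fun n => ‖ustar n - ul‖) atTop (nhds 0) :=
  strictly_convex_approx_minimizers_strong_convergence_general U hU_cl hU_cv Un hUn_ne hUn_cl hUn_cv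
    hUn_sub hUn_fd happrox G Gn hGn_nonneg J Jn hJ_def hJn_def hJn_cont hJn_sc hJ_sc hcons hweak
end
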